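/- With E, Φ, 𝒩 and assumptions (A₁)–(A₅) as above, the Nehari level c = inf_{u ∈ 𝒩} Φ(u) is strictly positive: there exists α > 0 with inf{Φ(u) : ‖u‖ = α} > 0, and c ≥ inf{Φ(u) : ‖u‖ = α} > 0. -/

import Mathlib

open scoped BigOperators
open Filter Topology

noncomputable section

abbrev Vtx (N : ℕ) := Fin N → ℤ

def LatAdj {N : ℕ} (x y : Vtx N) : Prop := (∑ i, |x i - y i|) = 1

instance {N : ℕ} (x y : Vtx N) : Decidable (LatAdj x y) := by
  unfold LatAdj; infer_instance

/-- `∑_x |u x|^p`. -/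
noncomputable def lpSum (N : ℕ) (p : ℝ) (u : Vtx N → ℝ) : ℝ := ∑' x, |u x| ^ p

/-- `(1/2) ∑_{x∼y} |u x − u y|^p` (sum over ordered pairs of adjacent vertices). -/
noncomputable def pEnergy (N : ℕ) (p : ℝ) (u : Vtx N → ℝ) : ℝ :=
  (1/2) * ∑' z : Vtx N × Vtx N, if LatAdj z.1 z.2 then |u z.1 - u z.2| ^ p else 0

/-- `(1/2) ∑_{x∼y} |∇_{xy}u|^{p−2} (∇_{xy}u)(∇_{xy}v)`. -/
noncomputable def gradPair (N : ℕ) (p : ℝ) (u v : Vtx N → ℝ) : ℝ :=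
  (1/2) * ∑' z : Vtx N × Vtx N,
    if LatAdj z.1 z.2 then |u z.2 - u z.1| ^ (p - 2) * (u z.2 - u z.1) * (v z.2 - v z.1) else 0

/-- discrete p-Laplacian. -/
noncomputable def pLap (N : ℕ) (p : ℝ) (u : Vtx N → ℝ) (x : Vtx N) : ℝ :=
  ∑' y, if LatAdj x y then |u y - u x| ^ (p - 2) * (u y - u x) else 0

/-- `‖u‖^p` for the potential norm. -/
noncomputable def eNormP (N : ℕ) (p : ℝ) (V : Vtx N → ℝ) (u : Vtx N → ℝ) : ℝ :=
  pEnergy N p u + ∑' x, V x * |u x| ^ p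

/-- the potential norm `‖u‖`. -/
noncomputable def eNorm (N : ℕ) (p : ℝ) (V : Vtx N → ℝ) (u : Vtx N → ℝ) : ℝ :=
  (eNormP N p V u) ^ (1/p)

/-- `F(x,t) = ∫₀^t f(x,s) ds`. -/
noncomputable def Fprim {N : ℕ} (f : Vtx N → ℝ → ℝ) (x : Vtx N) (t : ℝ) : ℝ :=
  ∫ s in (0:ℝ)..t, f x s

/-- the variational functional `Φ`. -/
noncomputable def PhiFun (N : ℕ) (p : ℝ) (V : Vtx N → ℝ) (f : Vtx N → ℝ → ℝ)
    (u : Vtx N → ℝ) : ℝ :=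
  (1/p) * eNormP N p V u - ∑' x, Fprim f x (u x)

/-- `Φ'(u)v`. -/
noncomputable def PhiDeriv (N : ℕ) (p : ℝ) (V : Vtx N → ℝ) (f : Vtx N → ℝ → ℝ)
    (u v : Vtx N → ℝ) : ℝ :=
  gradPair N p u v + (∑' x, V x * |u x| ^ (p - 2) * u x * v x) - ∑' x, f x (u x) * v x

/-- membership in `E = ℓ^p`. -/
def memE (N : ℕ) (p : ℝ) (u : Vtx N → ℝ) : Prop := Summable fun x => |u x| ^ p

/-- the Nehari manifold. -/
def Nehari (N : ℕ) (p : ℝ) (V : Vtx N → ℝ) (f : Vtx N → ℝ → ℝ) : Set (Vtx N → ℝ) :=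
  {u | memE N p u ∧ u ≠ 0 ∧ PhiDeriv N p V f u u = 0}

/-!
Periodicity lets `V` take only finitely many values, so `V₀ ∑ |u x|^p ≤ ‖u‖^p` with `V₀ > 0`.
By (A₁) and (A₃), `|F(x,t)|` and `|f(x,t) t|` are at most `ε |t|^p + C |t|^q`; with `ε = V₀/(2p)`
and `∑ |u x|^q ≤ (∑ |u x|^p)^(q/p)` this gives `∑ F(x,u) ≤ ‖u‖^p/(2p) + K ‖u‖^q`. Hence
`Φ(u) ≥ ‖u‖^p/(2p) - K ‖u‖^q`, which is positive on a small sphere, while the Nehari identity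
`‖u‖^p = ∑ f(x,u) u` keeps `𝒩` outside that sphere. Finally (A₄) makes `Φ(su) ≤ Φ(u)` for
`u ∈ 𝒩` and `0 < s ≤ 1`, so scaling `u ∈ 𝒩` onto the sphere transfers the bound to `𝒩`.
-/

lemma Real.rpow_sub_one_mul_self {x c : ℝ} (hx : 0 ≤ x) (hc : c ≠ 0) :
    x ^ (c - 1) * x = x ^ c := by
  rw [← Real.rpow_add_one' hx (by simpa using hc), sub_add_cancel]

lemma abs_rpow_sub_two_mul_self_mul_self {c : ℝ} (hc : c ≠ 0) (d : ℝ) :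
    |d| ^ (c - 2) * d * d = |d| ^ c := by
  have h2 : d * d = |d| ^ (2 : ℝ) := by rw [Real.rpow_two, sq_abs, sq]
  rw [mul_assoc, h2, ← Real.rpow_add' (abs_nonneg d) (by simpa using hc), sub_add_cancel]

lemma summable_rpow_and_tsum_rpow_le {ι : Type*} {a : ι → ℝ} {r : ℝ} (ha : ∀ i, 0 ≤ a i)
    (hr : 1 ≤ r) (hsum : Summable a) :
    Summable (fun i => a i ^ r) ∧ ∑' i, a i ^ r ≤ (∑' i, a i) ^ r := by
  set S := ∑' i, a i
  have hS : 0 ≤ S := tsum_nonneg ha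
  have hpow : ∀ i, a i ^ r ≤ a i * S ^ (r - 1) := fun i => by
    calc a i ^ r = a i * a i ^ (r - 1) := by
          rw [mul_comm, Real.rpow_sub_one_mul_self (ha i) (by linarith)]
      _ ≤ a i * S ^ (r - 1) := mul_le_mul_of_nonneg_left
          (Real.rpow_le_rpow (ha i) (hsum.le_tsum i fun j _ => ha j) (by linarith)) (ha i)
  have hsummable : Summable fun i => a i ^ r :=
    Summable.of_nonneg_of_le (fun i => Real.rpow_nonneg (ha i) r) hpow (hsum.mul_right _)
  refine ⟨hsummable, ?_⟩
  calc ∑' i, a i ^ r ≤ ∑' i, a i * S ^ (r - 1) := hsummable.tsum_le_tsum hpow (hsum.mul_right _)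
    _ = S ^ r := by rw [tsum_mul_right, mul_comm, Real.rpow_sub_one_mul_self hS (by linarith)]

lemma summable_abs_rpow_and_tsum_le {ι : Type*} {u : ι → ℝ} {p q : ℝ} (hp : 0 < p) (hpq : p ≤ q)
    (hu : Summable fun i => |u i| ^ p) :
    Summable (fun i => |u i| ^ q) ∧ ∑' i, |u i| ^ q ≤ (∑' i, |u i| ^ p) ^ (q / p) := by
  have hq : ∀ i, |u i| ^ q = (|u i| ^ p) ^ (q / p) := fun i => by
    rw [← Real.rpow_mul (abs_nonneg _), mul_div_cancel₀ _ hp.ne']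
  simp only [hq]
  exact summable_rpow_and_tsum_rpow_le (fun i => by positivity) ((one_le_div hp).mpr hpq) hu

lemma summable_and_tsum_le_of_abs_le {ι : Type*} {a b c : ι → ℝ} {ε C : ℝ}
    (hb : Summable b) (hc : Summable c) (h : ∀ i, |a i| ≤ ε * b i + C * c i) :
    Summable a ∧ ∑' i, a i ≤ ε * ∑' i, b i + C * ∑' i, c i := by
  have hbc : Summable fun i => ε * b i + C * c i := (hb.mul_left ε).add (hc.mul_left C)
  have ha : Summable a := hbc.of_norm_bounded h
  refine ⟨ha, ?_⟩
  calc ∑' i, a i ≤ ∑' i, (ε * b i + C * c i) :=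
        ha.tsum_le_tsum (fun i => (le_abs_self _).trans (h i)) hbc
    _ = ε * ∑' i, b i + C * ∑' i, c i := by
        rw [(hb.mul_left ε).tsum_add (hc.mul_left C), tsum_mul_left, tsum_mul_left]

def periodSubgroup {G α : Type*} [AddGroup G] (V : G → α) : AddSubgroup G where
  carrier := {c | Function.Periodic V c}
  add_mem' ha hb := ha.add_period hb
  zero_mem' x := by rw [add_zero]
  neg_mem' ha := ha.neg

lemma periodic_zsmul_of_periodic_single {N : ℕ} {α : Type*} {V : Vtx N → α} {T : ℤ}
    (hV : ∀ i, Function.Periodic V (T • Pi.single i 1)) (k : Vtx N) :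
    Function.Periodic V (T • k) := by
  have hk : T • k = ∑ i, k i • (T • Pi.single i (1 : ℤ)) := by
    conv_lhs => rw [← Finset.univ_sum_single k]
    simp only [Finset.smul_sum, ← Pi.single_smul, smul_eq_mul, mul_one, mul_comm]
  rw [hk]
  exact AddSubgroup.sum_mem (periodSubgroup V) fun i _ => zsmul_mem (hV i) (k i)

lemma exists_bounds_of_periodic {N : ℕ} {V : Vtx N → ℝ} {T : ℕ} (hT : 0 < T)
    (hV : ∀ x (i : Fin N), V (x + (T : ℤ) • Pi.single i 1) = V x) (hpos : ∀ x, 0 < V x) :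
    ∃ V₀ V₁ : ℝ, 0 < V₀ ∧ ∀ x, V₀ ≤ V x ∧ V x ≤ V₁ := by
  set box : Finset (Vtx N) := Fintype.piFinset fun _ => Finset.Ico 0 (T : ℤ)
  have hT' : (0 : ℤ) < T := by exact_mod_cast hT
  have hbox : box.Nonempty := ⟨0, by simp [box, hT]⟩
  have hreduce : ∀ x, (fun i => x i % (T : ℤ)) ∈ box ∧ V (fun i => x i % (T : ℤ)) = V x := by
    intro x
    refine ⟨Fintype.mem_piFinset.mpr fun i =>
      Finset.mem_Ico.mpr ⟨Int.emod_nonneg _ hT'.ne', Int.emod_lt_of_pos _ hT'⟩, ?_⟩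
    have hx : x = (fun i => x i % (T : ℤ)) + (T : ℤ) • fun i => x i / (T : ℤ) := by
      funext i
      simp [Int.emod_add_mul_ediv]
    conv_rhs => rw [hx]
    exact (periodic_zsmul_of_periodic_single (fun i y => hV y i) _ _).symm
  obtain ⟨a, ha, hmin⟩ := box.exists_min_image V hbox
  obtain ⟨b, hb, hmax⟩ := box.exists_max_image V hbox
  refine ⟨V a, V b, hpos a, fun x => ?_⟩
  obtain ⟨hmem, hx⟩ := hreduce x
  exact ⟨hx ▸ hmin _ hmem, hx ▸ hmax _ hmem⟩

lemma exists_abs_le_eps_rpow_add_rpow {ι : Type*} {f : ι → ℝ → ℝ} {p q : ℝ} (hq : 1 ≤ q)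
    (hlarge : ∃ a : ℝ, 0 < a ∧ ∀ x u, |f x u| ≤ a * (1 + |u| ^ (q - 1)))
    (hsmall : ∀ ε > (0:ℝ), ∃ δ > (0:ℝ), ∀ x u, |u| < δ → |f x u| ≤ ε * |u| ^ (p - 1))
    {ε : ℝ} (hε : 0 < ε) :
    ∃ C > (0:ℝ), ∀ x t, |f x t| ≤ ε * |t| ^ (p - 1) + C * |t| ^ (q - 1) := by
  obtain ⟨a, ha, hfa⟩ := hlarge
  obtain ⟨δ, hδ, hfδ⟩ := hsmall ε hε
  refine ⟨a * (1 / δ ^ (q - 1) + 1), by positivity, fun x t => ?_⟩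
  rcases lt_or_ge |t| δ with ht | ht
  · have : 0 ≤ a * (1 / δ ^ (q - 1) + 1) * |t| ^ (q - 1) := by positivity
    linarith [hfδ x t ht]
  · have hδt : δ ^ (q - 1) ≤ |t| ^ (q - 1) := Real.rpow_le_rpow hδ.le ht (by linarith)
    have hone : 1 ≤ 1 / δ ^ (q - 1) * |t| ^ (q - 1) := by
      rw [one_div_mul_eq_div, one_le_div (by positivity)]
      exact hδt
    calc |f x t| ≤ a * (1 + |t| ^ (q - 1)) := hfa x t
      _ ≤ a * (1 / δ ^ (q - 1) * |t| ^ (q - 1) + |t| ^ (q - 1)) := by gcongr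
      _ ≤ ε * |t| ^ (p - 1) + a * (1 / δ ^ (q - 1) + 1) * |t| ^ (q - 1) := by
          have : 0 ≤ ε * |t| ^ (p - 1) := by positivity
          linarith

section Growth

variable {N : ℕ} {f : Vtx N → ℝ → ℝ} {x : Vtx N} {p q ε C : ℝ}

lemma abs_mul_self_le_of_growth (hp : 1 ≤ p) (hq : 1 ≤ q)
    (hf : ∀ t, |f x t| ≤ ε * |t| ^ (p - 1) + C * |t| ^ (q - 1)) (t : ℝ) :
    |f x t * t| ≤ ε * |t| ^ p + C * |t| ^ q := by
  rw [abs_mul, ← Real.rpow_sub_one_mul_self (abs_nonneg t) (by linarith : p ≠ 0),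
    ← Real.rpow_sub_one_mul_self (abs_nonneg t) (by linarith : q ≠ 0)]
  nlinarith [hf t, abs_nonneg t]

lemma abs_Fprim_le_of_growth (hp : 1 ≤ p) (hq : 1 ≤ q) (hε : 0 ≤ ε) (hC : 0 ≤ C)
    (hf : ∀ t, |f x t| ≤ ε * |t| ^ (p - 1) + C * |t| ^ (q - 1)) (t : ℝ) :
    |Fprim f x t| ≤ ε * |t| ^ p + C * |t| ^ q := by
  have hbound : ∀ s ∈ Set.uIoc 0 t, ‖f x s‖ ≤ ε * |t| ^ (p - 1) + C * |t| ^ (q - 1) := by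
    intro s hs
    have hst : |s| ≤ |t| := by
      rcases Set.mem_uIoc.mp hs with h | h
      · rw [abs_of_pos h.1]; exact h.2.trans (le_abs_self t)
      · rw [abs_of_nonpos h.2]; exact (neg_le_neg h.1.le).trans (neg_le_abs t)
    calc ‖f x s‖ ≤ ε * |s| ^ (p - 1) + C * |s| ^ (q - 1) := hf s
      _ ≤ ε * |t| ^ (p - 1) + C * |t| ^ (q - 1) := by gcongr
  have := intervalIntegral.norm_integral_le_of_norm_le_const hbound
  rw [sub_zero] at this
  calc |Fprim f x t| ≤ (ε * |t| ^ (p - 1) + C * |t| ^ (q - 1)) * |t| := this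
    _ = ε * |t| ^ p + C * |t| ^ q := by
        rw [add_mul, mul_assoc, mul_assoc, Real.rpow_sub_one_mul_self (abs_nonneg t) (by linarith),
          Real.rpow_sub_one_mul_self (abs_nonneg t) (by linarith)]

end Growth

lemma intervalIntegral_le_of_monotoneOn_div_rpow {g : ℝ → ℝ} {p s t : ℝ} (hp : 0 < p)
    (hg : Continuous g) (hmono : MonotoneOn (fun r => g r / |r| ^ (p - 1)) (Set.Ioi 0))
    (hs₀ : 0 < s) (hs₁ : s ≤ 1) (ht : 0 < t) :
    ∫ r in s * t..t, g r ≤ (1 - s ^ p) / p * (g t * t) := by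
  have hst : 0 < s * t := mul_pos hs₀ ht
  have hle : s * t ≤ t := mul_le_of_le_one_left ht.le hs₁
  set M := g t / t ^ (p - 1)
  have hbound : ∀ r ∈ Set.Icc (s * t) t, g r ≤ M * r ^ (p - 1) := by
    intro r hr
    have hr₀ : 0 < r := hst.trans_le hr.1
    have : g r / |r| ^ (p - 1) ≤ g t / |t| ^ (p - 1) := hmono hr₀ ht hr.2
    rwa [abs_of_pos hr₀, abs_of_pos ht, div_le_iff₀ (by positivity)] at this
  have hint : IntervalIntegrable (fun r => M * r ^ (p - 1)) MeasureTheory.volume (s * t) t :=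
    (intervalIntegral.intervalIntegrable_rpow' (by linarith)).const_mul M
  calc ∫ r in s * t..t, g r ≤ ∫ r in s * t..t, M * r ^ (p - 1) :=
        intervalIntegral.integral_mono_on hle (hg.intervalIntegrable _ _) hint hbound
    _ = M * ((t ^ p - (s * t) ^ p) / p) := by
        rw [intervalIntegral.integral_const_mul, integral_rpow (Or.inl (by linarith)),
          sub_add_cancel]
    _ = (1 - s ^ p) / p * (M * t ^ (p - 1) * t) := by
        rw [Real.mul_rpow hs₀.le ht.le, mul_assoc M, Real.rpow_sub_one_mul_self ht.le hp.ne']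
        ring
    _ = (1 - s ^ p) / p * (g t * t) := by
        rw [div_mul_cancel₀ _ (by positivity)]

lemma Fprim_sub_Fprim_mul_le {N : ℕ} {f : Vtx N → ℝ → ℝ} {p : ℝ} {x : Vtx N} (hp : 0 < p)
    (hf : Continuous (f x))
    (hneg : MonotoneOn (fun u => f x u / |u| ^ (p - 1)) (Set.Iio 0))
    (hpos : MonotoneOn (fun u => f x u / |u| ^ (p - 1)) (Set.Ioi 0))
    {s : ℝ} (hs₀ : 0 < s) (hs₁ : s ≤ 1) (t : ℝ) :
    Fprim f x t - Fprim f x (s * t) ≤ (1 - s ^ p) / p * (f x t * t) := by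
  rw [Fprim, Fprim, intervalIntegral.integral_interval_sub_left (hf.intervalIntegrable _ _)
    (hf.intervalIntegrable _ _)]
  rcases lt_trichotomy t 0 with ht | rfl | ht
  · -- reflect `f x` to the positive half-line
    have hmono : MonotoneOn (fun r => -f x (-r) / |r| ^ (p - 1)) (Set.Ioi 0) := by
      intro a ha b hb hab
      have := hneg (Set.mem_Iio.mpr (neg_lt_zero.mpr hb)) (Set.mem_Iio.mpr (neg_lt_zero.mpr ha))
        (neg_le_neg hab)
      simp only [abs_neg] at this
      simp only [neg_div]
      exact neg_le_neg this
    have := intervalIntegral_le_of_monotoneOn_div_rpow (g := fun r => -f x (-r)) hp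
      (by fun_prop) hmono hs₀ hs₁ (neg_pos.mpr ht)
    rwa [intervalIntegral.integral_neg, intervalIntegral.integral_comp_neg, neg_neg, ← mul_neg,
      neg_neg, intervalIntegral.integral_symm, neg_neg, neg_mul_neg] at this
  · simp
  · exact intervalIntegral_le_of_monotoneOn_div_rpow hp hf hpos hs₀ hs₁ ht

lemma exists_level_of_rpow {p q K : ℝ} (hp : 1 < p) (hpq : p < q) (hK : 0 < K) :
    ∃ A > (0:ℝ), A / (4 * p) ≤ A / (2 * p) - K * A ^ (q / p) ∧
      ∀ t > (0:ℝ), t ≤ t / (2 * p) + K * t ^ (q / p) → A ≤ t := by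
  set r := (q - p) / p
  have hr : 0 < r := div_pos (by linarith) (by linarith)
  have hsplit : ∀ t > (0:ℝ), K * t ^ (q / p) = t * (K * t ^ r) := fun t ht => by
    have : 1 + r = q / p := by simp only [r]; field_simp; ring
    rw [← this, Real.rpow_one_add' ht.le (by positivity)]
    ring
  set A := (1 / (4 * p * K)) ^ r⁻¹
  have hA : 0 < A := by positivity
  have hAr : K * A ^ r = 1 / (4 * p) := by
    rw [Real.rpow_inv_rpow (by positivity) hr.ne']
    field_simp
  refine ⟨A, hA, ?_, fun t ht hle => ?_⟩
  · rw [hsplit A hA, hAr]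
    exact le_of_eq (by ring)
  · rw [hsplit t ht] at hle
    have htr : K * A ^ r < K * t ^ r := by
      rw [hAr]
      by_contra! h
      have h₁ : t * (K * t ^ r) ≤ t * (1 / (4 * p)) := mul_le_mul_of_nonneg_left h ht.le
      have h₂ : t * (3 / (4 * p)) < t :=
        mul_lt_of_lt_one_right ht ((div_lt_one (by positivity)).mpr (by linarith))
      have h₃ : t / (2 * p) + t * (1 / (4 * p)) = t * (3 / (4 * p)) := by ring
      linarith
    exact ((Real.rpow_lt_rpow_iff hA.le ht.le hr).mp (lt_of_mul_lt_mul_left htr hK.le)).le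

section Energy

variable {N : ℕ} {p : ℝ} {V : Vtx N → ℝ}

lemma pEnergy_nonneg (u : Vtx N → ℝ) : 0 ≤ pEnergy N p u :=
  mul_nonneg (by norm_num) (tsum_nonneg fun z => by split_ifs <;> positivity)

lemma memE_mul {u : Vtx N → ℝ} (hu : memE N p u) (s : ℝ) : memE N p (fun x => s * u x) := by
  have : Summable fun x => |s| ^ p * |u x| ^ p := hu.mul_left _
  simpa only [memE, abs_mul, Real.mul_rpow (abs_nonneg _) (abs_nonneg _)] using this

lemma eNormP_mul (u : Vtx N → ℝ) {s : ℝ} (hs : 0 ≤ s) :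
    eNormP N p V (fun x => s * u x) = s ^ p * eNormP N p V u := by
  have habs : ∀ a : ℝ, |s * a| ^ p = s ^ p * |a| ^ p := fun a => by
    rw [abs_mul, Real.mul_rpow (abs_nonneg _) (abs_nonneg _), abs_of_nonneg hs]
  simp only [eNormP, pEnergy, ← mul_sub, habs, mul_left_comm (V _), ← mul_ite_zero,
    tsum_mul_left]
  ring

lemma mul_tsum_le_eNormP {V₀ V₁ : ℝ} (hV₀ : 0 ≤ V₀) (hV : ∀ x, V₀ ≤ V x ∧ V x ≤ V₁)
    {u : Vtx N → ℝ} (hu : memE N p u) : V₀ * ∑' x, |u x| ^ p ≤ eNormP N p V u := by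
  have hVu : Summable fun x => V x * |u x| ^ p :=
    (hu.mul_left V₁).of_nonneg_of_le (fun x => mul_nonneg (hV₀.trans (hV x).1) (by positivity))
      (fun x => mul_le_mul_of_nonneg_right (hV x).2 (by positivity))
  calc V₀ * ∑' x, |u x| ^ p ≤ ∑' x, V x * |u x| ^ p := by
        rw [← tsum_mul_left]
        exact (hu.mul_left V₀).tsum_le_tsum
          (fun x => mul_le_mul_of_nonneg_right (hV x).1 (by positivity)) hVu
    _ ≤ eNormP N p V u := le_add_of_nonneg_left (pEnergy_nonneg u)

lemma PhiDeriv_self (hp : p ≠ 0) (f : Vtx N → ℝ → ℝ) (u : Vtx N → ℝ) :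
    PhiDeriv N p V f u u = eNormP N p V u - ∑' x, f x (u x) * u x := by
  have hgrad : ∀ z : Vtx N × Vtx N,
      (if LatAdj z.1 z.2 then |u z.2 - u z.1| ^ (p - 2) * (u z.2 - u z.1) * (u z.2 - u z.1)
        else 0) = if LatAdj z.1 z.2 then |u z.1 - u z.2| ^ p else 0 := fun z => by
    rw [abs_rpow_sub_two_mul_self_mul_self hp, abs_sub_comm]
  have hpot : ∀ x, V x * |u x| ^ (p - 2) * u x * u x = V x * |u x| ^ p := fun x => by
    rw [mul_assoc, mul_assoc, ← mul_assoc (_ ^ _), abs_rpow_sub_two_mul_self_mul_self hp]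
  simp only [PhiDeriv, gradPair, hgrad, hpot, eNormP, pEnergy]

end Energy

section Functional

variable {N : ℕ} {p : ℝ} {V : Vtx N → ℝ} {f : Vtx N → ℝ → ℝ}

lemma eNormP_nonneg (hV : ∀ x, 0 ≤ V x) (u : Vtx N → ℝ) : 0 ≤ eNormP N p V u :=
  add_nonneg (pEnergy_nonneg u) (tsum_nonneg fun x => mul_nonneg (hV x) (by positivity))

lemma eNormP_eq_of_eNorm_eq (hp : p ≠ 0) (hV : ∀ x, 0 ≤ V x) {u : Vtx N → ℝ} {A : ℝ}
    (hA : 0 ≤ A) (h : eNorm N p V u = A ^ (1 / p)) : eNormP N p V u = A := by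
  have := congrArg (· ^ p) h
  simp only [eNorm] at this
  rwa [← Real.rpow_mul (eNormP_nonneg hV u), ← Real.rpow_mul hA, one_div_mul_cancel hp,
    Real.rpow_one, Real.rpow_one] at this

lemma eNormP_pos {V₀ V₁ : ℝ} (hV₀ : 0 < V₀) (hV : ∀ x, V₀ ≤ V x ∧ V x ≤ V₁)
    {u : Vtx N → ℝ} (hu : memE N p u) (hne : u ≠ 0) : 0 < eNormP N p V u := by
  obtain ⟨x, hx⟩ := Function.ne_iff.mp hne
  have hterm : 0 < |u x| ^ p := Real.rpow_pos_of_pos (abs_pos.mpr hx) p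
  have hsum : 0 < ∑' y, |u y| ^ p := hterm.trans_le (hu.le_tsum x fun y _ => by positivity)
  exact (mul_pos hV₀ hsum).trans_le (mul_tsum_le_eNormP hV₀.le hV hu)

lemma tsum_le_of_abs_le_rpow {V₀ V₁ q ε C : ℝ} (hp : 0 < p) (hpq : p ≤ q) (hV₀ : 0 < V₀)
    (hV : ∀ x, V₀ ≤ V x ∧ V x ≤ V₁) {u : Vtx N → ℝ} (hu : memE N p u) (hε : 0 ≤ ε) (hC : 0 ≤ C)
    {a : Vtx N → ℝ} (ha : ∀ x, |a x| ≤ ε * |u x| ^ p + C * |u x| ^ q) :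
    Summable a ∧
      ∑' x, a x ≤ ε / V₀ * eNormP N p V u + C / V₀ ^ (q / p) * eNormP N p V u ^ (q / p) := by
  obtain ⟨hq, hq_le⟩ := summable_abs_rpow_and_tsum_le hp hpq hu
  obtain ⟨hsum, hle⟩ := summable_and_tsum_le_of_abs_le hu hq ha
  have hp_le : ∑' x, |u x| ^ p ≤ eNormP N p V u / V₀ :=
    (le_div_iff₀' hV₀).mpr (mul_tsum_le_eNormP hV₀.le hV hu)
  have ht : 0 ≤ eNormP N p V u := eNormP_nonneg (fun x => hV₀.le.trans (hV x).1) u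
  refine ⟨hsum, hle.trans ?_⟩
  calc ε * ∑' x, |u x| ^ p + C * ∑' x, |u x| ^ q
      ≤ ε * (eNormP N p V u / V₀) + C * (eNormP N p V u / V₀) ^ (q / p) := by
        gcongr
        exact hq_le.trans (Real.rpow_le_rpow (tsum_nonneg fun x => by positivity) hp_le
          (div_nonneg (hp.le.trans hpq) hp.le))
    _ = ε / V₀ * eNormP N p V u + C / V₀ ^ (q / p) * eNormP N p V u ^ (q / p) := by
        rw [Real.div_rpow ht hV₀.le]
        ring

lemma PhiFun_mul_le_of_PhiDeriv_self_eq_zero (hp : 0 < p) (hf : ∀ x, Continuous (f x))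
    (hneg : ∀ x, MonotoneOn (fun u => f x u / |u| ^ (p - 1)) (Set.Iio 0))
    (hpos : ∀ x, MonotoneOn (fun u => f x u / |u| ^ (p - 1)) (Set.Ioi 0))
    {u : Vtx N → ℝ} (hu : PhiDeriv N p V f u u = 0) {s : ℝ} (hs₀ : 0 < s) (hs₁ : s ≤ 1)
    (hF : Summable fun x => Fprim f x (u x)) (hFs : Summable fun x => Fprim f x (s * u x))
    (hfu : Summable fun x => f x (u x) * u x) :
    PhiFun N p V f (fun x => s * u x) ≤ PhiFun N p V f u := by
  rw [PhiDeriv_self hp.ne', sub_eq_zero] at hu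
  have hdiff : ∑' x, (Fprim f x (u x) - Fprim f x (s * u x))
      ≤ (1 - s ^ p) / p * ∑' x, f x (u x) * u x := by
    rw [← tsum_mul_left]
    exact (hF.sub hFs).tsum_le_tsum
      (fun x => Fprim_sub_Fprim_mul_le hp (hf x) (hneg x) (hpos x) hs₀ hs₁ (u x))
      (hfu.mul_left _)
  rw [hF.tsum_sub hFs, ← hu] at hdiff
  simp only [PhiFun, eNormP_mul u hs₀.le]
  have : (1 - s ^ p) / p * eNormP N p V u
      = 1 / p * eNormP N p V u - 1 / p * (s ^ p * eNormP N p V u) := by ring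
  linarith

lemma le_PhiFun_of_le_eNormP (hp : 0 < p) {A β : ℝ} (hA : 0 < A)
    (hsphere : ∀ u, memE N p u → eNormP N p V u = A → β ≤ PhiFun N p V f u)
    {u : Vtx N → ℝ} (hu : memE N p u) (hAu : A ≤ eNormP N p V u)
    (hscale : ∀ s, 0 < s → s ≤ 1 → PhiFun N p V f (fun x => s * u x) ≤ PhiFun N p V f u) :
    β ≤ PhiFun N p V f u := by
  set t := eNormP N p V u
  have ht : 0 < t := hA.trans_le hAu
  set s := (A / t) ^ (1 / p)
  have hs₀ : 0 < s := by positivity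
  have hs₁ : s ≤ 1 := Real.rpow_le_one (by positivity) ((div_le_one ht).mpr hAu) (by positivity)
  have hsp : s ^ p = A / t := by
    rw [← Real.rpow_mul (by positivity), one_div_mul_cancel hp.ne', Real.rpow_one]
  refine (hsphere _ (memE_mul hu s) ?_).trans (hscale s hs₀ hs₁)
  rw [eNormP_mul u hs₀.le, hsp, div_mul_cancel₀ _ ht.ne']

end Functional

theorem stmt_16_general (N : ℕ) (p q : ℝ) (hp : 1 < p) (hq : p < q)
    (V : Vtx N → ℝ) (f : Vtx N → ℝ → ℝ) (T : ℕ) (hT : 0 < T)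
    (hA1 : ∃ a : ℝ, 0 < a ∧ ∀ x u, |f x u| ≤ a * (1 + |u| ^ (q - 1)))
    (hfc : ∀ x, Continuous (f x))
    (hA2V : ∀ x (i : Fin N), V (x + (T : ℤ) • Pi.single i 1) = V x)
    (hVpos : ∀ x, 0 < V x)
    (hA3 : ∀ ε > (0:ℝ), ∃ δ > (0:ℝ), ∀ x u, |u| < δ → |f x u| ≤ ε * |u| ^ (p - 1))
    (hA4 : ∀ x, StrictMonoOn (fun u => f x u / |u| ^ (p - 1)) (Set.Iio 0) ∧
               StrictMonoOn (fun u => f x u / |u| ^ (p - 1)) (Set.Ioi 0)) :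
    ∃ α > (0:ℝ), ∃ β > (0:ℝ),
      (∀ u : Vtx N → ℝ, memE N p u → eNorm N p V u = α → β ≤ PhiFun N p V f u) ∧
      (∀ u ∈ Nehari N p V f, β ≤ PhiFun N p V f u) := by
  have hp₀ : 0 < p := by linarith
  obtain ⟨V₀, V₁, hV₀, hV⟩ := exists_bounds_of_periodic hT hA2V hVpos
  obtain ⟨C, hC, hf⟩ :=
    exists_abs_le_eps_rpow_add_rpow (by linarith) hA1 hA3 (ε := V₀ / (2 * p)) (by positivity)
  set K := C / V₀ ^ (q / p)
  have hε : ∀ t, V₀ / (2 * p) / V₀ * t = t / (2 * p) := fun t => by field_simp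
  have hsum : ∀ u, memE N p u → ∀ a : Vtx N → ℝ,
      (∀ x, |a x| ≤ V₀ / (2 * p) * |u x| ^ p + C * |u x| ^ q) →
      Summable a ∧ ∑' x, a x ≤ eNormP N p V u / (2 * p) + K * eNormP N p V u ^ (q / p) :=
    fun u hu a ha => by
      simpa only [hε] using tsum_le_of_abs_le_rpow hp₀ hq.le hV₀ hV hu (by positivity) hC.le ha
  have hF := fun u hu => hsum u hu _ fun x =>
    abs_Fprim_le_of_growth hp.le (by linarith) (by positivity) hC.le (hf x) (u x)
  obtain ⟨A, hA, hlevel, hlarge⟩ := exists_level_of_rpow hp hq (K := K) (by positivity)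
  have hsphere : ∀ u, memE N p u → eNormP N p V u = A → A / (4 * p) ≤ PhiFun N p V f u := by
    intro u hu huA
    have hFu := (hF u hu).2
    rw [huA] at hFu
    rw [PhiFun, huA, show 1 / p * A = A / (2 * p) + A / (2 * p) by ring]
    linarith
  refine ⟨A ^ (1 / p), by positivity, A / (4 * p), by positivity, fun u hu hα =>
    hsphere u hu (eNormP_eq_of_eNorm_eq hp₀.ne' (fun x => (hVpos x).le) hA.le hα), ?_⟩
  rintro u ⟨hu, hne, hder⟩
  have hfu := hsum u hu _ fun x => abs_mul_self_le_of_growth hp.le (by linarith) (hf x) (u x)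
  refine le_PhiFun_of_le_eNormP hp₀ hA hsphere hu ?_ fun s hs₀ hs₁ =>
    PhiFun_mul_le_of_PhiDeriv_self_eq_zero hp₀ hfc (fun x => (hA4 x).1.monotoneOn)
      (fun x => (hA4 x).2.monotoneOn) hder hs₀ hs₁ (hF u hu).1 (hF _ (memE_mul hu s)).1 hfu.1
  rw [PhiDeriv_self hp₀.ne', sub_eq_zero] at hder
  refine hlarge _ (eNormP_pos hV₀ hV hu hne) ?_
  linarith [hder ▸ hfu.2]

/-- the Nehari level is strictly positive: there are positive alpha, beta with
Phi >= beta on the sphere of radius alpha, and Phi >= beta on the Nehari manifold. -/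
theorem stmt_16 (N : ℕ) (p q : ℝ) (hp : 1 < p) (hq : p < q)
    (V : Vtx N → ℝ) (f : Vtx N → ℝ → ℝ) (T : ℕ) (hT : 0 < T)
    (hA1 : ∃ a : ℝ, 0 < a ∧ ∀ x u, |f x u| ≤ a * (1 + |u| ^ (q - 1)))
    (hfc : ∀ x, Continuous (f x))
    (hA2V : ∀ x (i : Fin N), V (x + (T : ℤ) • Pi.single i 1) = V x)
    (hA2f : ∀ x (i : Fin N) (u : ℝ), f (x + (T : ℤ) • Pi.single i 1) u = f x u)
    (hVpos : ∀ x, 0 < V x)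
    (hA3 : ∀ ε > (0:ℝ), ∃ δ > (0:ℝ), ∀ x u, |u| < δ → |f x u| ≤ ε * |u| ^ (p - 1))
    (hA4 : ∀ x, StrictMonoOn (fun u => f x u / |u| ^ (p - 1)) (Set.Iio 0) ∧
               StrictMonoOn (fun u => f x u / |u| ^ (p - 1)) (Set.Ioi 0))
    (hA5 : ∀ M : ℝ, ∃ R > (0:ℝ), ∀ x u, R ≤ |u| → M ≤ Fprim f x u / |u| ^ p) :
    ∃ α > (0:ℝ), ∃ β > (0:ℝ),
      (∀ u : Vtx N → ℝ, memE N p u → eNorm N p V u = α → β ≤ PhiFun N p V f u) ∧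
      (∀ u ∈ Nehari N p V f, β ≤ PhiFun N p V f u) :=
  stmt_16_general N p q hp hq V f T hT hA1 hfc hA2V hVpos hA3 hA4
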